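/- arXiv:1312.4413 — 2 statements merged into one kernel-verified Lean document; each statement's English description precedes it below -/
import Mathlib

section
/- Let s_t denote the number of tuples (k, x_0, ..., x_{2k}) of nonnegative integers with x_0 + ... + x_{2k} = t and x_{2i}+x_{2i+1} ≥ 1 for all i < k. Then s_t = (1/4)·(2+√2)^{t+1} + (1/4)·(2−√2)^{t+1} for all t ≥ 0; in particular s_t ≤ (2+√2)^t. -/
/-!
A good tuple is either `[t]` or starts with a pair `(x₀, x₁)` of sum `m ∈ [1, t]`, followed by a
good tuple of sum `t - m`; as there are `m + 1` such pairs, `s_t = 1 + ∑_{j<t} (t + 1 - j) s_j`.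
Differencing this twice gives `s_{t+2} = 4 s_{t+1} - 2 s_t`, whose characteristic roots are
`2 ± √2`. The bound follows from `(2 - √2)^(t+1) ≤ (2 - √2)(2 + √2)^t`.
-/

def goodTuples (t : ℕ) : Set (List ℕ) :=
  {l | l.length % 2 = 1 ∧ l.sum = t ∧
    ∀ i, 2 * i + 2 ≤ l.length → 1 ≤ l.getD (2 * i) 0 + l.getD (2 * i + 1) 0}

open Finset

lemma singleton_mem_goodTuples (t : ℕ) : [t] ∈ goodTuples t :=
  ⟨rfl, List.sum_singleton, fun i hi => by simp at hi⟩

lemma cons_cons_mem_goodTuples {x₀ x₁ t : ℕ} {l : List ℕ} :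
    x₀ :: x₁ :: l ∈ goodTuples t ↔
      1 ≤ x₀ + x₁ ∧ x₀ + x₁ ≤ t ∧ l ∈ goodTuples (t - (x₀ + x₁)) := by
  simp only [goodTuples, Set.mem_ofPred_eq, List.length_cons, List.sum_cons]
  have shift : ∀ i,
      (x₀ :: x₁ :: l).getD (2 * (i + 1)) 0 + (x₀ :: x₁ :: l).getD (2 * (i + 1) + 1) 0 =
        l.getD (2 * i) 0 + l.getD (2 * i + 1) 0 := fun i => by
    simp [show 2 * (i + 1) = 2 * i + 1 + 1 by ring]
  constructor
  · rintro ⟨hlen, hsum, hpairs⟩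
    refine ⟨by simpa using hpairs 0 (by omega), by omega, by omega, by omega, fun i hi => ?_⟩
    rw [← shift]; exact hpairs (i + 1) (by omega)
  · rintro ⟨hpos, hle, hlen, hsum, hpairs⟩
    refine ⟨by omega, by omega, ?_⟩
    rintro (_ | i) hi
    · simpa using hpos
    · rw [shift]; exact hpairs i (by omega)

/-- `j` is the sum of the tail and `x₀` the first entry, which determines `x₁ = t - j - x₀`. -/
def goodTuplesOfSplit (t : ℕ) :
    Unit ⊕ (Σ j : Fin t, Fin (t + 1 - j) × goodTuples j) → goodTuples t
  | .inl _ => ⟨[t], singleton_mem_goodTuples t⟩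
  | .inr ⟨j, x₀, l⟩ => ⟨x₀ :: (t - j - x₀) :: l, by
      have := j.2; have := x₀.2
      rw [cons_cons_mem_goodTuples, show t - (x₀ + (t - j - x₀)) = j by omega]
      exact ⟨by omega, by omega, l.2⟩⟩

lemma goodTuplesOfSplit_injective (t : ℕ) : Function.Injective (goodTuplesOfSplit t) := by
  rintro (⟨⟩ | ⟨j, x₀, l⟩) (⟨⟩ | ⟨j', x₀', l'⟩) h <;>
    simp only [goodTuplesOfSplit, Subtype.mk.injEq, List.cons.injEq, reduceCtorEq,
      and_false] at h
  · rfl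
  · obtain ⟨hx, hmid, hl⟩ := h
    have := j.2; have := j'.2; have := x₀.2; have := x₀'.2
    obtain rfl : j = j' := Fin.ext (by omega)
    obtain rfl : x₀ = x₀' := Fin.ext hx
    obtain rfl : l = l' := Subtype.ext hl
    rfl

lemma goodTuplesOfSplit_surjective (t : ℕ) : Function.Surjective (goodTuplesOfSplit t) := by
  rintro ⟨_ | ⟨x₀, _ | ⟨x₁, l⟩⟩, hl⟩
  · exact absurd hl.1 (by simp)
  · obtain rfl : x₀ = t := by simpa using hl.2.1
    exact ⟨.inl (), rfl⟩
  · obtain ⟨hpos, hle, hl⟩ := cons_cons_mem_goodTuples.mp hl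
    have hx₀ : x₀ < t + 1 - (t - (x₀ + x₁)) := by omega
    refine ⟨.inr ⟨⟨t - (x₀ + x₁), by omega⟩, ⟨x₀, hx₀⟩, ⟨l, hl⟩⟩, ?_⟩
    simp only [goodTuplesOfSplit, Subtype.mk.injEq, List.cons.injEq, true_and, and_true]
    omega

noncomputable def goodTuplesEquivSplit (t : ℕ) :
    Unit ⊕ (Σ j : Fin t, Fin (t + 1 - j) × goodTuples j) ≃ goodTuples t :=
  .ofBijective _ ⟨goodTuplesOfSplit_injective t, goodTuplesOfSplit_surjective t⟩

instance finite_goodTuples (t : ℕ) : Finite (goodTuples t) := by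
  induction t using Nat.strong_induction_on with
  | _ t ih =>
    have (j : Fin t) : Finite (goodTuples j) := ih j j.2
    exact .of_equiv _ (goodTuplesEquivSplit t)

lemma card_goodTuples (t : ℕ) :
    (Nat.card (goodTuples t) : ℝ) =
      1 + ∑ j ∈ range t, ((t : ℝ) + 1 - j) * Nat.card (goodTuples j) := by
  have (j : ℕ) : Fintype (goodTuples j) := .ofFinite _
  rw [← Nat.card_congr (goodTuplesEquivSplit t)]
  simp only [Nat.card_eq_fintype_card, Fintype.card_sum, Fintype.card_sigma, Fintype.card_prod,
    Fintype.card_fin, Fintype.card_unit]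
  rw [Fin.sum_univ_eq_sum_range (fun j => (t + 1 - j) * Fintype.card (goodTuples j))]
  push_cast
  refine congrArg _ (sum_congr rfl fun j hj => ?_)
  rw [Nat.cast_sub (by simp at hj; omega)]
  push_cast; rfl

section Recurrence

variable {R : Type*} [CommRing R] {a : ℕ → R}

lemma succ_eq_three_mul_add_sum (h : ∀ t, a t = 1 + ∑ j ∈ range t, ((t : R) + 1 - j) * a j)
    (t : ℕ) : a (t + 1) = 3 * a t + ∑ j ∈ range t, a j := by
  have hsucc := h (t + 1)
  rw [sum_range_succ, Nat.cast_succ] at hsucc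
  have split : ∑ j ∈ range t, ((t : R) + 1 + 1 - j) * a j
      = ∑ j ∈ range t, ((t : R) + 1 - j) * a j + ∑ j ∈ range t, a j := by
    rw [← sum_add_distrib]; exact sum_congr rfl fun j _ => by ring
  rw [split, ← sub_eq_iff_eq_add'.mpr (h t)] at hsucc
  rw [hsucc]; ring

lemma add_two_eq_four_mul_sub (h : ∀ t, a t = 1 + ∑ j ∈ range t, ((t : R) + 1 - j) * a j)
    (t : ℕ) : a (t + 2) = 4 * a (t + 1) - 2 * a t := by
  have h₁ := succ_eq_three_mul_add_sum h (t + 1)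
  have h₀ := succ_eq_three_mul_add_sum h t
  rw [sum_range_succ] at h₁
  linear_combination h₁ - h₀

end Recurrence

lemma eq_closed_form_of_recurrence {a : ℕ → ℝ} (h₀ : a 0 = 1) (h₁ : a 1 = 3)
    (h : ∀ t, a (t + 2) = 4 * a (t + 1) - 2 * a t) (t : ℕ) :
    a t = (1 / 4) * (2 + √2) ^ (t + 1) + (1 / 4) * (2 - √2) ^ (t + 1) := by
  have hsq : √2 ^ 2 = 2 := Real.sq_sqrt zero_le_two
  induction t using Nat.twoStepInduction with
  | zero => rw [h₀]; ring
  | one => rw [h₁]; linear_combination (-1 / 2 : ℝ) * hsq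
  | more n ih₀ ih₁ =>
    rw [h, ih₀, ih₁]
    linear_combination (-1 / 4 * ((2 + √2) ^ (n + 1) + (2 - √2) ^ (n + 1))) * hsq

lemma closed_form_le (t : ℕ) :
    (1 / 4) * (2 + √2) ^ (t + 1) + (1 / 4) * (2 - √2) ^ (t + 1) ≤ (2 + √2) ^ t := by
  have hsqrt : √2 ≤ 2 := Real.sqrt_le_iff.mpr ⟨zero_le_two, by norm_num⟩
  have hpow : (2 - √2) ^ t ≤ (2 + √2) ^ t :=
    pow_le_pow_left₀ (by linarith) (by linarith [Real.sqrt_nonneg 2]) t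
  calc (1 / 4) * (2 + √2) ^ (t + 1) + (1 / 4) * (2 - √2) ^ (t + 1)
      = (1 / 4) * ((2 + √2) * (2 + √2) ^ t + (2 - √2) * (2 - √2) ^ t) := by ring
    _ ≤ (1 / 4) * ((2 + √2) * (2 + √2) ^ t + (2 - √2) * (2 + √2) ^ t) := by gcongr
    _ = (2 + √2) ^ t := by ring

/-- `s_t = (1/4)(2+√2)^{t+1} + (1/4)(2-√2)^{t+1}`; in particular `s_t ≤ (2+√2)^t`. -/
theorem stmt3 (t : ℕ) :
    (Nat.card (goodTuples t) : ℝ) =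
        (1 / 4) * (2 + Real.sqrt 2) ^ (t + 1) + (1 / 4) * (2 - Real.sqrt 2) ^ (t + 1) ∧
      (Nat.card (goodTuples t) : ℝ) ≤ (2 + Real.sqrt 2) ^ t := by
  have h₀ : (Nat.card (goodTuples 0) : ℝ) = 1 := by simpa using card_goodTuples 0
  have h₁ : (Nat.card (goodTuples 1) : ℝ) = 3 := by
    rw [succ_eq_three_mul_add_sum card_goodTuples 0, h₀]; simp
  have closed := eq_closed_form_of_recurrence h₀ h₁ (add_two_eq_four_mul_sub card_goodTuples) t
  exact ⟨closed, closed ▸ closed_form_le t⟩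
end

section
/- Given a finite sequence (w_1, ..., w_m) of positive real numbers with total sum w, there exists a sequence (a_1, ..., a_m) of nonempty binary strings, strictly increasing in the order ≺, and an index k, such that |a_i| ≤ ⌊log₂(w + w_k) − log₂ w_i⌋ for all i. -/
/-!
Lay the weights out, in order, as the in-order traversal of a binary tree: the weight at which
the prefix sums cross half the total is the root (codeword `[]`), the weights before it form
the subtree below `0`, those after it the subtree below `1`. Each side weighs at most half of
its parent, so a weight `u` at depth `d` satisfies `u * 2 ^ d ≤ w`, and in-order traversal is
`≺`-increasing since `s·0·t ≺ s ≺ s·1·t'`. To make all codewords nonempty, first cut the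
sequence into two blocks of weight at most `(w + w_k) / 2`, `w_k` a largest weight (possible
because any single weight is at most `w_k`), and hang one tree below `0`, the other below `1`.
-/

/-- The base relations: `s·0·t ≺ s` and `s ≺ s·1·t'`. -/
def PrecBase (a b : List Bool) : Prop :=
  (∃ s t, a = s ++ false :: t ∧ b = s) ∨ (∃ s t, b = s ++ true :: t ∧ a = s)

/-- The order `≺` on binary strings: the transitive closure of `PrecBase`. -/
def Prec : List Bool → List Bool → Prop :=
  Relation.TransGen PrecBase

theorem PrecBase.cons {s t : List Bool} (b : Bool) (h : PrecBase s t) :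
    PrecBase (b :: s) (b :: t) := by
  rcases h with ⟨p, q, hs, ht⟩ | ⟨p, q, ht, hs⟩
  · exact .inl ⟨b :: p, q, by simp [hs], by simp [ht]⟩
  · exact .inr ⟨b :: p, q, by simp [ht], by simp [hs]⟩

theorem Prec.cons {s t : List Bool} (b : Bool) (h : Prec s t) : Prec (b :: s) (b :: t) :=
  Relation.TransGen.lift (b :: ·) (fun _ _ => PrecBase.cons b) _ _ h

theorem prec_false_cons_nil (s : List Bool) : Prec (false :: s) [] :=
  .single (.inl ⟨[], s, rfl, rfl⟩)

theorem prec_nil_true_cons (t : List Bool) : Prec [] (true :: t) :=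
  .single (.inr ⟨[], t, rfl, rfl⟩)

theorem pairwise_prec_node {bsL bsR : List (List Bool)} (hL : bsL.Pairwise Prec)
    (hR : bsR.Pairwise Prec) :
    (bsL.map (false :: ·) ++ [] :: bsR.map (true :: ·)).Pairwise Prec := by
  simp only [List.pairwise_append, List.pairwise_cons, List.pairwise_map, List.mem_map,
    List.mem_cons, forall_exists_index, and_imp]
  refine ⟨hL.imp (Prec.cons false), ⟨?_, hR.imp (Prec.cons true)⟩, ?_⟩
  · rintro _ s - rfl
    exact prec_nil_true_cons s
  · rintro _ s - rfl b (rfl | ⟨t, -, rfl⟩)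
    · exact prec_false_cons_nil s
    · exact (prec_false_cons_nil s).trans (prec_nil_true_cons t)

def Encodes (T : ℝ) (ws : List ℝ) (bs : List (List Bool)) : Prop :=
  bs.Pairwise Prec ∧ List.Forall₂ (fun u b => u * 2 ^ b.length ≤ T) ws bs

namespace Encodes

variable {T T' : ℝ} {ws L R : List ℝ} {bs bsL bsR : List (List Bool)}

theorem mono (h : Encodes T ws bs) (hT : T ≤ T') : Encodes T' ws bs :=
  ⟨h.1, h.2.imp fun _ _ hub => hub.trans hT⟩

theorem forall₂_map_cons (h : Encodes (T / 2) ws bs) (c : Bool) :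
    List.Forall₂ (fun u b => u * 2 ^ b.length ≤ T) ws (bs.map (c :: ·)) := by
  rw [List.forall₂_map_right_iff]
  refine h.2.imp fun u b hub => ?_
  rw [List.length_cons, pow_succ]
  linarith

theorem node (hL : Encodes (T / 2) L bsL) (hR : Encodes (T / 2) R bsR) {u : ℝ} (hu : u ≤ T) :
    Encodes T (L ++ u :: R) (bsL.map (false :: ·) ++ [] :: bsR.map (true :: ·)) :=
  ⟨pairwise_prec_node hL.1 hR.1,
    List.rel_append (hL.forall₂_map_cons false)
      (.cons (by simpa using hu) (hR.forall₂_map_cons true))⟩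

theorem branch (hL : Encodes (T / 2) L bsL) (hR : Encodes (T / 2) R bsR) :
    Encodes T (L ++ R) (bsL.map (false :: ·) ++ bsR.map (true :: ·)) :=
  ⟨(pairwise_prec_node hL.1 hR.1).sublist (by simp),
    List.rel_append (hL.forall₂_map_cons false) (hR.forall₂_map_cons true)⟩

theorem exists_fun_ofFn {m : ℕ} {T : ℝ} {w : Fin m → ℝ} {bs : List (List Bool)}
    (h : Encodes T (List.ofFn w) bs) :
    ∃ a : Fin m → List Bool, (∀ i, a i ∈ bs) ∧ (∀ i j, i < j → Prec (a i) (a j)) ∧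
      ∀ i, w i * 2 ^ (a i).length ≤ T := by
  have hlen : m = bs.length := by simpa using h.2.length_eq
  refine ⟨fun i => bs[i.val]'(hlen ▸ i.2), fun i => List.getElem_mem _,
    fun i j hij => List.pairwise_iff_getElem.1 h.1 _ _ _ _ hij, fun i => ?_⟩
  simpa using h.2.get (i := i.val) (by simp) (hlen ▸ i.2)

end Encodes

theorem List.exists_eq_append_cons_of_lt_sum {ws : List ℝ} {C : ℝ} (hC : 0 ≤ C)
    (h : C < ws.sum) : ∃ L x R, ws = L ++ x :: R ∧ L.sum ≤ C ∧ C < L.sum + x := by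
  induction ws generalizing C with
  | nil => rw [List.sum_nil] at h; linarith
  | cons a t ih =>
    by_cases ha : C < a
    · exact ⟨[], a, t, rfl, by simpa using hC, by simpa using ha⟩
    · rw [List.sum_cons] at h
      obtain ⟨L, x, R, rfl, hL, hLx⟩ := ih (C := C - a) (by linarith) (by linarith)
      exact ⟨a :: L, x, R, rfl, by rw [List.sum_cons]; linarith,
        by rw [List.sum_cons]; linarith⟩

theorem exists_encodes_sum (ws : List ℝ) (hpos : ∀ x ∈ ws, 0 < x) :
    ∃ bs, Encodes ws.sum ws bs := by
  induction hn : ws.length using Nat.strong_induction_on generalizing ws with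
  | _ n ih =>
  rcases eq_or_ne ws [] with rfl | hne
  · exact ⟨[], .nil, .nil⟩
  have hS : 0 < ws.sum := List.sum_pos ws hpos hne
  obtain ⟨L, x, R, rfl, hL, hLx⟩ :=
    List.exists_eq_append_cons_of_lt_sum (ws := ws) (C := ws.sum / 2) (by positivity)
      (by linarith)
  simp only [List.mem_append, List.mem_cons] at hpos
  have hLpos : ∀ y ∈ L, 0 < y := fun y hy => hpos y (.inl hy)
  have hRpos : ∀ y ∈ R, 0 < y := fun y hy => hpos y (.inr (.inr hy))
  have hsum : (L ++ x :: R).sum = L.sum + x + R.sum := by rw [List.sum_append, List.sum_cons]; ring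
  have hL0 : 0 ≤ L.sum := List.sum_nonneg fun y hy => (hLpos y hy).le
  have hR0 : 0 ≤ R.sum := List.sum_nonneg fun y hy => (hRpos y hy).le
  obtain ⟨bsL, hbsL⟩ := ih L.length (by simp [← hn]) L hLpos rfl
  obtain ⟨bsR, hbsR⟩ := ih R.length (by simp only [← hn, List.length_append, List.length_cons]; omega) R hRpos rfl
  exact ⟨_, (hbsL.mono hL).node (hbsR.mono (by linarith)) (by linarith)⟩

theorem exists_nonempty_encodes_sum_add (ws : List ℝ) (hpos : ∀ x ∈ ws, 0 < x) {M : ℝ}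
    (hM0 : 0 ≤ M) (hM : ∀ x ∈ ws, x ≤ M) :
    ∃ bs, (∀ b ∈ bs, b ≠ []) ∧ Encodes (ws.sum + M) ws bs := by
  suffices ∃ L R, ws = L ++ R ∧ L.sum ≤ (ws.sum + M) / 2 ∧ R.sum ≤ (ws.sum + M) / 2 by
    obtain ⟨L, R, rfl, hL, hR⟩ := this
    simp only [List.mem_append] at hpos
    obtain ⟨bsL, hbsL⟩ := exists_encodes_sum L fun y hy => hpos y (.inl hy)
    obtain ⟨bsR, hbsR⟩ := exists_encodes_sum R fun y hy => hpos y (.inr hy)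
    refine ⟨_, ?_, (hbsL.mono hL).branch (hbsR.mono hR)⟩
    simp only [List.mem_append, List.mem_map]
    rintro _ (⟨_, -, rfl⟩ | ⟨_, -, rfl⟩) <;> exact List.cons_ne_nil _ _
  have hS : 0 ≤ ws.sum := List.sum_nonneg fun y hy => (hpos y hy).le
  by_cases hC : ws.sum ≤ (ws.sum + M) / 2
  · exact ⟨ws, [], by simp, hC, by rw [List.sum_nil]; linarith⟩
  obtain ⟨L, x, R, hws, hL, hLx⟩ :=
    List.exists_eq_append_cons_of_lt_sum (ws := ws) (C := (ws.sum + M) / 2) (by positivity)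
      (by linarith)
  have hxM : x ≤ M := hM x (by simp [hws])
  refine ⟨L, x :: R, hws, hL, ?_⟩
  have hsum : ws.sum = L.sum + (x :: R).sum := by simp [hws]
  simp only [List.sum_cons] at hsum ⊢
  linarith

theorem natCast_le_floor_logb_sub {u T : ℝ} {n : ℕ} (hu : 0 < u) (h : u * 2 ^ n ≤ T) :
    (n : ℤ) ≤ ⌊Real.logb 2 T - Real.logb 2 u⌋ := by
  have hlog := Real.logb_le_logb_of_le (b := 2) (by norm_num) (by positivity) h
  rw [Real.logb_mul hu.ne' (by positivity), Real.logb_pow, Real.logb_self_eq_one (by norm_num)]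
    at hlog
  rw [Int.le_floor]
  push_cast
  linarith

open Real in
/-- Given positive weights `w_1, …, w_m` summing to `w`, there are a `≺`-increasing
sequence of *nonempty* binary strings and an index `k` with
`|a_i| ≤ ⌊log₂(w + w_k) − log₂ w_i⌋`. -/
theorem stmt12 (m : ℕ) (hm : 1 ≤ m) (w : Fin m → ℝ) (hw : ∀ i, 0 < w i) :
    ∃ (a : Fin m → List Bool) (k : Fin m),
      (∀ i, a i ≠ []) ∧
      (∀ i j : Fin m, i < j → Prec (a i) (a j)) ∧
      ∀ i, ((a i).length : ℤ) ≤ ⌊logb 2 ((∑ j, w j) + w k) - logb 2 (w i)⌋ := by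
  have : Nonempty (Fin m) := ⟨⟨0, hm⟩⟩
  obtain ⟨k, hk⟩ := Finite.exists_max w
  obtain ⟨bs, hne, hbs⟩ := exists_nonempty_encodes_sum_add (List.ofFn w)
    (by simpa [List.forall_mem_ofFn_iff] using hw) (hw k).le
    (by simpa [List.forall_mem_ofFn_iff] using hk)
  obtain ⟨a, ha_mem, ha_prec, ha_len⟩ := hbs.exists_fun_ofFn
  refine ⟨a, k, fun i => hne _ (ha_mem i), ha_prec, fun i => natCast_le_floor_logb_sub (hw i) ?_⟩
  simpa [List.sum_ofFn] using ha_len i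
end
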